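/- arXiv:1908.03070 — 8 statements merged into one kernel-verified Lean document; each statement's English description precedes it below -/
import Mathlib

section
/- Let p be an odd prime, m and k positive integers with gcd(m, k) = 1 and gcd(m, p-1) = 1. Then gcd(p^{2k} - 1, 2(p^m - 1)/(p-1)) = 2. -/
/-!
Write `n = (p^m - 1)/(p - 1) = 1 + p + ⋯ + p^(m-1)`. Since `p ≡ 1 [MOD p - 1]`, `n ≡ m [MOD p - 1]`,
so `n` is coprime to `p - 1`. As `m` is odd and coprime to `k`, any common divisor of `p^(2k) - 1`
and `n` divides `gcd(p^(2k) - 1, p^m - 1) = p^gcd(2k, m) - 1 = p - 1`, and as it also divides `n`,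
it is `1`. So `gcd(p^(2k) - 1, 2n) = gcd(p^(2k) - 1, 2) = 2`, the last step because `p` is odd.
-/

open Finset

namespace Nat

variable {x : ℕ}

theorem geomSum_modEq_sub_one (hx : 1 ≤ x) (n : ℕ) : ∑ i ∈ range n, x ^ i ≡ n [MOD x - 1] := by
  have hx1 : x ≡ 1 [MOD x - 1] := modEq_sub hx
  calc ∑ i ∈ range n, x ^ i ≡ ∑ _i ∈ range n, 1 [MOD x - 1] :=
        ModEq.sum fun i _ => by simpa using hx1.pow i
    _ = n := by simp

theorem coprime_geomSum_sub_one {n : ℕ} (hx : 1 ≤ x) (h : Coprime n (x - 1)) :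
    Coprime (∑ i ∈ range n, x ^ i) (x - 1) :=
  (geomSum_modEq_sub_one hx n).gcd_eq.trans h

theorem coprime_pow_sub_one_geomSum {n j : ℕ} (hx : 1 ≤ x) (hnj : Coprime n j)
    (h : Coprime n (x - 1)) : Coprime (x ^ j - 1) (∑ i ∈ range n, x ^ i) := by
  have hdvd_sub_one : gcd (x ^ j - 1) (∑ i ∈ range n, x ^ i) ∣ x - 1 := by
    have := gcd_dvd_gcd_of_dvd_right (x ^ j - 1) (Dvd.intro _ (geom_sum_mul_of_one_le hx n))
    rwa [pow_sub_one_gcd_pow_sub_one, hnj.symm.gcd_eq_one, pow_one] at this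
  have := dvd_gcd (gcd_dvd_right _ _) hdvd_sub_one
  rwa [coprime_geomSum_sub_one hx h, dvd_one] at this

end Nat

theorem stmt_1_general (p m k : ℕ) (hp : p.Prime) (hodd : Odd p)
    (hmk : Nat.gcd m k = 1)
    (hmp : Nat.gcd m (p - 1) = 1) :
    Nat.gcd (p ^ (2 * k) - 1) (2 * (p ^ m - 1) / (p - 1)) = 2 := by
  have hgeom : (p ^ m - 1) / (p - 1) = ∑ i ∈ Finset.range m, p ^ i :=
    (Nat.geomSum_eq hp.two_le m).symm
  have hm_odd : Nat.Coprime m 2 :=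
    Nat.Coprime.coprime_dvd_right (Nat.Odd.sub_odd hodd odd_one).two_dvd hmp
  have hcop : Nat.Coprime (p ^ (2 * k) - 1) ((p ^ m - 1) / (p - 1)) :=
    hgeom ▸ Nat.coprime_pow_sub_one_geomSum hp.one_lt.le (Nat.Coprime.mul_right hm_odd hmk) hmp
  rw [Nat.mul_div_assoc 2 (Nat.sub_one_dvd_pow_sub_one p m),
    Nat.Coprime.gcd_mul_right_cancel_right 2 hcop.symm]
  exact Nat.gcd_eq_right (Nat.Odd.sub_odd hodd.pow odd_one).two_dvd

theorem stmt_1 (p m k : ℕ) (hp : p.Prime) (hodd : Odd p)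
    (hm : 0 < m) (hk : 0 < k) (hmk : Nat.gcd m k = 1)
    (hmp : Nat.gcd m (p - 1) = 1) :
    Nat.gcd (p ^ (2 * k) - 1) (2 * (p ^ m - 1) / (p - 1)) = 2 :=
  stmt_1_general p m k hp hodd hmk hmp
end

section
/- Let p be an odd prime and t, s, h, m integers with 0 ≤ t, s, h ≤ m-1, gcd(m, t) = 1 and gcd(m, s-h) = 1. Then the congruence (p^t - 1)·v ≡ p^s - p^h (mod p^m - 1) has a solution v, and any solution v satisfies that gcd(v, 2(p^m-1)/(p-1)) divides 2. -/
open Finset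

private lemma geom_cast (q p c : ℕ) (h1 : (p : ZMod q) = 1) :
    ((∑ i ∈ range c, (p:ℤ)^i : ℤ) : ZMod q) = c := by
  push_cast
  rw [h1]
  simp

private lemma pone {q p u m' : ℕ} (hq : q.Prime) (hu : (q:ℤ) ∣ (p:ℤ)^u - 1)
    (hm : (q:ℤ) ∣ (p:ℤ)^m' - 1) (hg : Nat.gcd m' u = 1) : (p : ZMod q) = 1 := by
  haveI := Fact.mk hq
  have h1 : (p : ZMod q)^u = 1 := by
    have := (ZMod.intCast_zmod_eq_zero_iff_dvd _ q).mpr hu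
    push_cast at this
    linear_combination this
  have h2 : (p : ZMod q)^m' = 1 := by
    have := (ZMod.intCast_zmod_eq_zero_iff_dvd _ q).mpr hm
    push_cast at this
    linear_combination this
  have := Nat.dvd_gcd (orderOf_dvd_of_pow_eq_one h2) (orderOf_dvd_of_pow_eq_one h1)
  rw [hg, Nat.dvd_one] at this
  exact orderOf_eq_one_iff.mp this

private lemma powmod (p m' a b : ℕ) (hab : a ≡ b [MOD m']) :
    (p:ℤ)^a ≡ (p:ℤ)^b [ZMOD (p:ℤ)^m' - 1] := by
  have h1 : (p:ℤ)^m' ≡ 1 [ZMOD (p:ℤ)^m' - 1] :=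
    (Int.modEq_iff_dvd.mpr ⟨1, by ring⟩).symm
  have key : ∀ c : ℕ, (p:ℤ)^c ≡ (p:ℤ)^(c % m') [ZMOD (p:ℤ)^m' - 1] := by
    intro c
    conv_lhs => rw [← Nat.mod_add_div c m']
    rw [pow_add, pow_mul]
    calc (p:ℤ)^(c % m') * ((p:ℤ)^m')^(c / m')
        ≡ (p:ℤ)^(c % m') * 1^(c / m') [ZMOD (p:ℤ)^m' - 1] := ((h1.pow _).mul_left _)
      _ = (p:ℤ)^(c % m') := by ring
  calc (p:ℤ)^a ≡ (p:ℤ)^(a % m') [ZMOD (p:ℤ)^m' - 1] := key a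
    _ = (p:ℤ)^(b % m') := by rw [hab]
    _ ≡ (p:ℤ)^b [ZMOD (p:ℤ)^m' - 1] := (key b).symm

private lemma core (p m' u c : ℕ) (t : ℕ) (v k e : ℤ) (hp : p.Prime) (hodd : Odd p)
    (hm1 : 1 ≤ m') (hmu : Nat.gcd m' u = 1)
    (he : e = 1 ∨ e = -1)
    (heq : (∑ i ∈ range t, (p:ℤ)^i) * v
        = e * (p:ℤ)^c * (∑ i ∈ range u, (p:ℤ)^i) + (∑ i ∈ range m', (p:ℤ)^i) * k) :
    Int.gcd v (2 * ∑ i ∈ range m', (p:ℤ)^i) ∣ 2 := by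
  set S : ℕ → ℤ := fun n => ∑ i ∈ range n, (p:ℤ)^i with hS
  set d : ℕ := Int.gcd v (2 * S m') with hd
  have hppos : (0:ℤ) < p := by exact_mod_cast hp.pos
  have hSpos : ∀ n, 1 ≤ n → 0 < S n := by
    intro n hn
    exact Finset.sum_pos (fun i _ => pow_pos hppos i) (nonempty_range_iff.mpr (by omega))
  have hdv : (d:ℤ) ∣ v := Int.gcd_dvd_left _ _
  have hdS : (d:ℤ) ∣ 2 * S m' := Int.gcd_dvd_right _ _
  have hgsm : ∀ n, S n * ((p:ℤ) - 1) = (p:ℤ)^n - 1 := fun n => geom_sum_mul _ _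
  -- all prime factors of d are 2
  have hq2 : ∀ q : ℕ, q.Prime → q ∣ d → q = 2 := by
    intro q hq hqd
    by_contra hne
    have hqZ : Prime (q:ℤ) := Nat.prime_iff_prime_int.mp hq
    have hqv : (q:ℤ) ∣ v := (Int.natCast_dvd_natCast.mpr hqd).trans hdv
    have hq2S : (q:ℤ) ∣ 2 * S m' := (Int.natCast_dvd_natCast.mpr hqd).trans hdS
    have hqS : (q:ℤ) ∣ S m' := by
      rcases hqZ.dvd_mul.mp hq2S with h | h
      · exact absurd ((Nat.prime_dvd_prime_iff_eq hq Nat.prime_two).mp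
          (Int.natCast_dvd_natCast.mp (by exact_mod_cast h))) hne
      · exact h
    have hqm : (q:ℤ) ∣ (p:ℤ)^m' - 1 := by
      rw [← hgsm]; exact hqS.mul_right _
    have hqnp : ¬ (q:ℤ) ∣ (p:ℤ) := by
      intro hcon
      have : (q:ℤ) ∣ 1 := (dvd_sub_right (hcon.pow (by omega))).mp hqm |>.neg_right |> (by simpa using ·)
      exact hqZ.not_isUnit (isUnit_of_dvd_one this)
    have hqSu : (q:ℤ) ∣ S u := by
      have h1 : (q:ℤ) ∣ e * (p:ℤ)^c * S u := by
        have : (q:ℤ) ∣ S t * v - S m' * k := dvd_sub (hqv.mul_left _) (hqS.mul_right _)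
        rw [heq] at this; simpa [hS] using this
      rcases he with rfl | rfl
      · rcases hqZ.dvd_mul.mp (by simpa using h1) with h | h
        · exact absurd (hqZ.dvd_of_dvd_pow h) hqnp
        · exact h
      · rcases hqZ.dvd_mul.mp (by simpa using h1.neg_right.neg_left |>.neg_left) with h | h
        · exact absurd (hqZ.dvd_of_dvd_pow h) hqnp
        · exact h
    have hqu : (q:ℤ) ∣ (p:ℤ)^u - 1 := by
      rw [← hgsm]; exact hqSu.mul_right _
    have hp1 : (p : ZMod q) = 1 := pone hq hqu hqm hmu
    have hqdu : q ∣ u := by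
      rw [← ZMod.natCast_eq_zero_iff, ← geom_cast q p u hp1]
      exact (ZMod.intCast_zmod_eq_zero_iff_dvd _ q).mpr hqSu
    have hqdm : q ∣ m' := by
      rw [← ZMod.natCast_eq_zero_iff, ← geom_cast q p m' hp1]
      exact (ZMod.intCast_zmod_eq_zero_iff_dvd _ q).mpr hqS
    have : q ∣ 1 := hmu ▸ Nat.dvd_gcd hqdm hqdu
    exact hq.one_lt.ne' (Nat.dvd_one.mp this)
  -- 4 does not divide d
  have h4 : ¬ (4 ∣ d) := by
    intro h4d
    have hv2 : (2:ℤ) ∣ v := (by norm_num : (2:ℤ) ∣ (4:ℤ)).trans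
      ((Int.natCast_dvd_natCast.mpr h4d).trans hdv |> (by exact_mod_cast ·))
    have hS2 : (2:ℤ) ∣ S m' := by
      have h1 : (4:ℤ) ∣ 2 * S m' :=
        ((Int.natCast_dvd_natCast.mpr h4d).trans hdS |> (by exact_mod_cast ·))
      obtain ⟨c', hc'⟩ := h1
      exact ⟨c', by linarith⟩
    have hp2 : (p : ZMod 2) = 1 := by
      rw [← ZMod.natCast_mod, Nat.odd_iff.mp hodd]; exact Nat.cast_one
    have hm2 : (2:ℕ) ∣ m' := by
      rw [← ZMod.natCast_eq_zero_iff, ← geom_cast 2 p m' hp2]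
      exact (ZMod.intCast_zmod_eq_zero_iff_dvd _ 2).mpr (by simpa using hS2)
    have hu2 : ¬ (2:ℕ) ∣ u := by
      intro hcon
      have : (2:ℕ) ∣ 1 := hmu ▸ Nat.dvd_gcd hm2 hcon
      omega
    have huone : (u : ZMod 2) = 1 := by
      have h0 : (u : ZMod 2) ≠ 0 := fun hc => hu2 ((ZMod.natCast_eq_zero_iff _ _).mp hc)
      have hall : ∀ x : ZMod 2, x ≠ 0 → x = 1 := by decide
      exact hall _ h0
    -- cast heq into ZMod 2
    have hcast : ((S t * v : ℤ) : ZMod 2) = ((e * (p:ℤ)^c * S u + S m' * k : ℤ) : ZMod 2) := by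
      rw [heq]
    have hv0 : ((v : ℤ) : ZMod 2) = 0 := (ZMod.intCast_zmod_eq_zero_iff_dvd _ 2).mpr (by simpa using hv2)
    have hSm0 : ((S m' : ℤ) : ZMod 2) = 0 := (ZMod.intCast_zmod_eq_zero_iff_dvd _ 2).mpr (by simpa using hS2)
    have hSu1 : ((S u : ℤ) : ZMod 2) = 1 := by rw [geom_cast 2 p u hp2, huone]
    have he1 : ((e : ℤ) : ZMod 2) = 1 := by
      rcases he with rfl | rfl <;> simp <;> decide
    rw [Int.cast_mul, Int.cast_add, Int.cast_mul, Int.cast_mul, Int.cast_mul, Int.cast_pow,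
      hv0, hSm0, hSu1, he1] at hcast
    push_cast [hp2] at hcast
    simp at hcast
  have hdne : d ≠ 0 := by
    intro h0
    rw [hd, Int.gcd_eq_zero_iff] at h0
    have := hSpos m' hm1
    omega
  obtain ⟨len, hlen⟩ : ∃ len, d = 2 ^ len :=
    ⟨_, Nat.eq_prime_pow_of_unique_prime_dvd hdne (fun hpr hdvd => hq2 _ hpr hdvd)⟩
  have hle : len ≤ 1 := by
    by_contra hc
    refine h4 ?_
    rw [hlen]
    calc (4:ℕ) = 2 ^ 2 := by norm_num
      _ ∣ 2 ^ len := pow_dvd_pow 2 (by omega)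
  calc d = 2 ^ len := hlen
    _ ∣ 2 ^ 1 := pow_dvd_pow 2 hle
    _ = 2 := by norm_num

theorem stmt_4 (p m t s h : ℕ) (hp : p.Prime) (hodd : Odd p)
    (ht1 : 1 ≤ t) (ht : t ≤ m - 1) (hs : s ≤ m - 1) (hh : h ≤ m - 1)
    (hsh : s ≠ h) (hmt : Nat.gcd m t = 1)
    (hgcd : Int.gcd (m : ℤ) ((s : ℤ) - (h : ℤ)) = 1) :
    (∃ v : ℤ, ((p : ℤ) ^ t - 1) * v ≡ (p : ℤ) ^ s - (p : ℤ) ^ h [ZMOD ((p : ℤ) ^ m - 1)]) ∧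
    ∀ v : ℤ, ((p : ℤ) ^ t - 1) * v ≡ (p : ℤ) ^ s - (p : ℤ) ^ h [ZMOD ((p : ℤ) ^ m - 1)] →
      (Int.gcd v ((2 * ((p : ℤ) ^ m - 1)) / ((p : ℤ) - 1)) : ℤ) ∣ 2 := by
  have hm2 : 2 ≤ m := by omega
  have hP1 : (1:ℤ) < (p:ℤ) := by exact_mod_cast hp.one_lt
  have hPne : ((p:ℤ) - 1) ≠ 0 := by linarith
  have hgsm : ∀ n : ℕ, (∑ i ∈ range n, (p:ℤ)^i) * ((p:ℤ) - 1) = (p:ℤ)^n - 1 :=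
    fun n => geom_sum_mul _ _
  have hdiv : (2 * ((p:ℤ)^m - 1)) / ((p:ℤ) - 1) = 2 * ∑ i ∈ range m, (p:ℤ)^i := by
    rw [← hgsm m]
    rw [show (2 * ((∑ i ∈ range m, (p:ℤ)^i) * ((p:ℤ) - 1))) =
      ((p:ℤ) - 1) * (2 * ∑ i ∈ range m, (p:ℤ)^i) by ring]
    exact Int.mul_ediv_cancel_left _ hPne
  constructor
  · -- existence
    obtain ⟨a, -, ha⟩ := Nat.exists_mul_mod_eq_one_of_coprime
      (Nat.coprime_comm.mp hmt) (by omega : 1 < m)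
    have hta : t * a ≡ 1 [MOD m] := by
      unfold Nat.ModEq; rw [ha, Nat.mod_eq_of_lt (by omega)]
    have hdvd : ∀ x : ℕ, (p:ℤ)^t - 1 ∣ (p:ℤ)^(t*x) - 1 := by
      intro x
      exact ⟨∑ i ∈ range x, ((p:ℤ)^t)^i, by rw [pow_mul, ← geom_sum_mul]; ring⟩
    obtain ⟨w, hw⟩ : (p:ℤ)^t - 1 ∣ (p:ℤ)^(t*(a*s)) - (p:ℤ)^(t*(a*h)) := by
      have := dvd_sub (hdvd (a*s)) (hdvd (a*h))
      simpa using this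
    refine ⟨w, ?_⟩
    rw [← hw]
    have h1 : (p:ℤ)^(t*(a*s)) ≡ (p:ℤ)^s [ZMOD (p:ℤ)^m - 1] := by
      apply powmod
      calc t*(a*s) = (t*a)*s := by ring
        _ ≡ 1*s [MOD m] := hta.mul_right s
        _ = s := by ring
    have h2 : (p:ℤ)^(t*(a*h)) ≡ (p:ℤ)^h [ZMOD (p:ℤ)^m - 1] := by
      apply powmod
      calc t*(a*h) = (t*a)*h := by ring
        _ ≡ 1*h [MOD m] := hta.mul_right h
        _ = h := by ring
    exact h1.sub h2
  · -- gcd property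
    intro v hv
    rw [hdiv]
    obtain ⟨k, hk⟩ := Int.ModEq.dvd hv
    -- hk : (p:ℤ)^s - (p:ℤ)^h - ((p:ℤ)^t - 1) * v = ((p:ℤ)^m - 1) * k
    have key : Int.gcd v (2 * ∑ i ∈ range m, (p:ℤ)^i) ∣ 2 := by
      rcases Nat.lt_or_ge h s with hlt | hge
      · -- s > h, u = s - h, e = 1
        have hmu : Nat.gcd m (s - h) = 1 := by
          rw [show ((s:ℤ) - (h:ℤ)) = ((s - h : ℕ) : ℤ) by omega] at hgcd
          rwa [Int.gcd_natCast_natCast] at hgcd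
        have hps : (p:ℤ)^s = (p:ℤ)^h * (p:ℤ)^(s-h) := by
          rw [← pow_add]; congr 1; omega
        refine core p m (s-h) h t v (-k) 1 hp hodd (by omega) hmu (Or.inl rfl) ?_
        apply mul_left_cancel₀ hPne
        have e1 := hgsm t; have e2 := hgsm (s-h); have e3 := hgsm m
        linear_combination v * e1 - (p:ℤ)^h * e2 + k * e3 - hk + hps
      · -- h > s, u = h - s, e = -1
        have hlt : s < h := by omega
        have hmu : Nat.gcd m (h - s) = 1 := by
          have : Int.gcd (m:ℤ) ((h:ℤ) - (s:ℤ)) = 1 := by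
            rw [Int.gcd] at hgcd ⊢
            rw [show ((h:ℤ) - (s:ℤ)).natAbs = ((s:ℤ) - (h:ℤ)).natAbs by omega]
            exact hgcd
          rw [show ((h:ℤ) - (s:ℤ)) = ((h - s : ℕ) : ℤ) by omega] at this
          rwa [Int.gcd_natCast_natCast] at this
        have hps : (p:ℤ)^h = (p:ℤ)^s * (p:ℤ)^(h-s) := by
          rw [← pow_add]; congr 1; omega
        refine core p m (h-s) s t v (-k) (-1) hp hodd (by omega) hmu (Or.inr rfl) ?_
        apply mul_left_cancel₀ hPne
        have e1 := hgsm t; have e2 := hgsm (h-s); have e3 := hgsm m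
        linear_combination v * e1 + (p:ℤ)^s * e2 + k * e3 - hk - hps
    exact_mod_cast Int.natCast_dvd_natCast.mpr key
end

section
/- Let p be an odd prime, x an element of a field of characteristic p, α a nonzero element of F_p, and k a positive integer. If (x + α)^{p^k + 1} = ±(x^{p^k + 1} + α), then x·(x^{p^{2k} - 1} - 1)·(x^{p^k} - 1) = 0. -/
theorem stmt_8 (p : ℕ) (hp : p.Prime) (hodd : Odd p)
    (K : Type*) [Field K] [Algebra (ZMod p) K] [CharP K p]
    (x : K) (α : ZMod p) (hα : α ≠ 0) (k : ℕ) (hk : 0 < k)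
    (h : (x + algebraMap (ZMod p) K α) ^ (p ^ k + 1) =
          x ^ (p ^ k + 1) + algebraMap (ZMod p) K α ∨
         (x + algebraMap (ZMod p) K α) ^ (p ^ k + 1) =
          -(x ^ (p ^ k + 1) + algebraMap (ZMod p) K α)) :
    x * (x ^ (p ^ (2 * k) - 1) - 1) * (x ^ (p ^ k) - 1) = 0 := by
  haveI : Fact p.Prime := ⟨hp⟩
  set a : K := algebraMap (ZMod p) K α with ha_def
  have ha : a ≠ 0 := by
    intro h0
    exact hα ((algebraMap (ZMod p) K).injective (by simp [← ha_def, h0]))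
  have haq : a ^ p ^ k = a := by
    rw [ha_def, ← map_pow, ZMod.pow_card_pow]
  have h2ne : (2 : K) ≠ 0 := by
    intro h0
    have hd : (p : ℕ) ∣ 2 := (CharP.cast_eq_zero_iff K p 2).mp (by exact_mod_cast h0)
    have : p = 2 := (Nat.prime_dvd_prime_iff_eq hp Nat.prime_two).mp hd
    rw [this] at hodd
    exact (Nat.not_odd_iff_even.mpr (by norm_num)) hodd
  have hq2 : x ^ p ^ (2 * k) = (x ^ p ^ k) ^ p ^ k := by
    rw [← pow_mul, ← pow_add, two_mul]
  have key : x ^ p ^ (2 * k) = x →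
      x * (x ^ (p ^ (2 * k) - 1) - 1) * (x ^ p ^ k - 1) = 0 := by
    intro hX
    have h1 : x * x ^ (p ^ (2 * k) - 1) = x ^ p ^ (2 * k) := by
      rw [← pow_succ']
      congr 1
      have : 1 ≤ p ^ (2 * k) := Nat.one_le_pow _ _ hp.pos
      omega
    have h2 : x * (x ^ (p ^ (2 * k) - 1) - 1) = 0 := by
      rw [mul_sub, h1, hX, mul_one, sub_self]
    rw [h2, zero_mul]
  have hexp : (x + a) ^ (p ^ k + 1) = (x ^ p ^ k + a) * (x + a) := by
    rw [pow_succ, add_pow_char_pow, haq]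
  rcases h with h1 | h1
  · -- ε = 1 case
    rw [hexp] at h1
    have h2 : a * (x ^ p ^ k + x + a - 1) = 0 := by linear_combination h1
    have hx : x ^ p ^ k = 1 - a - x := by
      rcases mul_eq_zero.mp h2 with h3 | h3
      · exact absurd h3 ha
      · linear_combination h3
    apply key
    rw [hq2, hx]
    have e : (1 - a - x : K) = (1 - a) + (-x) := by ring
    rw [e, add_pow_char_pow, sub_pow_char_pow, one_pow, haq,
      (hodd.pow).neg_pow, hx]
    ring
  · -- ε = -1 case
    rw [hexp] at h1
    have E : 2 * x ^ p ^ k * x + a * x ^ p ^ k + a * x + a ^ 2 + a = 0 := by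
      linear_combination h1
    have E2 := congrArg (iterateFrobenius K p k) E
    simp only [map_add, map_mul, map_pow, map_ofNat, map_zero,
      iterateFrobenius_def] at E2
    rw [haq] at E2
    have F : ((x ^ p ^ k) ^ p ^ k - x) * (2 * x ^ p ^ k + a) = 0 := by
      linear_combination E2 - E
    rcases mul_eq_zero.mp F with h3 | h3
    · apply key
      rw [hq2]
      linear_combination h3
    · have G : a * (a + 2) = 0 := by
        linear_combination 2 * E - (2 * x + a) * h3
      have ha2 : a = -2 := by
        rcases mul_eq_zero.mp G with h4 | h4
        · exact absurd h4 ha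
        · linear_combination h4
      rw [ha2] at h3
      have hx1 : (2 : K) * (x ^ p ^ k - 1) = 0 := by linear_combination h3
      rcases mul_eq_zero.mp hx1 with h4 | h4
      · exact absurd h4 h2ne
      · rw [h4, mul_zero]
end

section
/- Let p be an odd prime and m > 2 an odd integer. Then gcd(p + 1 - n/2, n) = 1, where n = 2(p^m - 1)/(p - 1). -/
theorem stmt_9 (p m : ℕ) (hp : p.Prime) (hodd : Odd p)
    (hm : 2 < m) (hmodd : Odd m)
    (n : ℕ) (hn : n = 2 * (p ^ m - 1) / (p - 1)) :
    Int.gcd ((p : ℤ) + 1 - ((n / 2 : ℕ) : ℤ)) (n : ℤ) = 1 := by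
  set s : ℕ := ∑ i ∈ Finset.range m, p ^ i with hs_def
  have hp1 : 1 ≤ p := hp.one_lt.le
  have hpm1 : 1 ≤ p ^ m := Nat.one_le_pow _ _ hp.pos
  have hs : (p - 1) * s = p ^ m - 1 := by
    zify [hp1, hpm1, hs_def]
    push_cast
    rw [mul_comm]
    exact geom_sum_mul _ _
  have hn2 : n = 2 * s := by
    rw [hn, ← hs, show 2 * ((p - 1) * s) = (p - 1) * (2 * s) by ring,
      Nat.mul_div_cancel_left _ (by have := hp.two_le; omega : 0 < p - 1)]
  have hnd : n / 2 = s := by rw [hn2, Nat.mul_div_cancel_left _ two_pos]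
  -- s is odd
  have hsodd : Odd s := by
    rw [Nat.odd_iff]
    have h1 : ∀ i ∈ Finset.range m, p ^ i % 2 = 1 % 2 := fun i _ => by
      rw [Nat.pow_mod, Nat.odd_iff.mp hodd, one_pow]
    calc s % 2 = (∑ i ∈ Finset.range m, p ^ i % 2) % 2 := Finset.sum_nat_mod _ _ _
      _ = (∑ _i ∈ Finset.range m, 1 % 2) % 2 := by rw [Finset.sum_congr rfl h1]
      _ = m % 2 := by simp [Finset.sum_const, Finset.card_range]
      _ = 1 := Nat.odd_iff.mp hmodd
  -- s ≡ 1 mod (p + 1)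
  have hdvd : ((p : ℤ) + 1) ∣ ((s : ℤ) - 1) := by
    have hneg : (∑ i ∈ Finset.range m, (-1 : ℤ) ^ i) = 1 := by
      rw [neg_one_geom_sum, if_neg (Nat.not_even_iff_odd.mpr hmodd)]
    have hrw : (s : ℤ) - 1 = ∑ i ∈ Finset.range m, ((p : ℤ) ^ i - (-1) ^ i) := by
      rw [Finset.sum_sub_distrib, hneg, hs_def]
      push_cast
      ring
    rw [hrw]
    refine Finset.dvd_sum fun i _ => ?_
    have := sub_dvd_pow_sub_pow (p : ℤ) (-1) i
    simpa [sub_neg_eq_add] using this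
  obtain ⟨k, hk⟩ := hdvd
  have hc1 : IsCoprime ((p : ℤ) + 1) (s : ℤ) := by
    have := (isCoprime_one_right (x := (p : ℤ) + 1)).add_mul_left_right k
    rwa [show (1 : ℤ) + ((p : ℤ) + 1) * k = (s : ℤ) by linarith] at this
  have hc2 : IsCoprime ((p : ℤ) + 1 - (s : ℤ)) (s : ℤ) := by
    have := hc1.add_mul_left_left (-1)
    simpa [mul_neg_one, ← sub_eq_add_neg] using this
  have haodd : Odd ((p : ℤ) + 1 - (s : ℤ)) := by
    have h1 : Odd ((p : ℤ)) := by exact_mod_cast hodd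
    have h2 : Odd ((s : ℤ)) := by exact_mod_cast hsodd
    exact (Odd.add_one h1).sub_odd h2
  have hc3 : IsCoprime ((p : ℤ) + 1 - (s : ℤ)) (2 : ℤ) := by
    obtain ⟨t, ht⟩ := haodd
    rw [ht]
    have := (isCoprime_one_right (x := (2 : ℤ))).add_mul_left_right t
    rw [show (1 : ℤ) + 2 * t = 2 * t + 1 by ring] at this
    exact this.symm
  have hfin : IsCoprime ((p : ℤ) + 1 - (s : ℤ)) (2 * (s : ℤ)) := hc3.mul_right hc2
  rw [hnd, hn2]
  push_cast
  exact Int.isCoprime_iff_gcd_eq_one.mp hfin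
end

section
/- Let p be an odd prime and s ≥ 2 an even integer, m > 2 odd with gcd(m, s-1) = 1. Then gcd((p^s - p)/(p - 1), 2(p^m - 1)/(p - 1)) = 1. -/
open Finset in
theorem stmt_12 (p m s : ℕ) (hp : p.Prime) (hodd : Odd p)
    (hs : 2 ≤ s) (hseven : Even s) (hm : 2 < m) (hmodd : Odd m)
    (hgcd : Nat.gcd m (s - 1) = 1) :
    Nat.gcd ((p ^ s - p) / (p - 1)) (2 * (p ^ m - 1) / (p - 1)) = 1 := by
  have hp1 : 1 < p := hp.one_lt
  have hq : 0 < p - 1 := by omega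
  set G1 : ℕ := ∑ i ∈ range (s - 1), p ^ i with hG1def
  set G2 : ℕ := ∑ i ∈ range m, p ^ i with hG2def
  have h1 : G1 * (p - 1) = p ^ (s - 1) - 1 := geom_sum_mul_of_one_le hp1.le _
  have h2 : G2 * (p - 1) = p ^ m - 1 := geom_sum_mul_of_one_le hp1.le _
  have e1 : (p ^ s - p) / (p - 1) = p * G1 := by
    have : p ^ s - p = p * G1 * (p - 1) := by
      have hs' : s = (s - 1) + 1 := by omega
      rw [mul_assoc, h1, Nat.mul_sub, mul_one, ← pow_succ']
      rw [← hs']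
    rw [this, Nat.mul_div_cancel _ hq]
  have e2 : 2 * (p ^ m - 1) / (p - 1) = 2 * G2 := by
    rw [← h2, ← mul_assoc, Nat.mul_div_cancel _ hq]
  rw [e1, e2]
  -- now prove coprimality
  have hpG2 : Nat.Coprime p G2 := by
    rw [hp.coprime_iff_not_dvd]
    intro hdvd
    have hm' : m = (m - 1) + 1 := by omega
    rw [hG2def, hm', geom_sum_succ] at hdvd
    have : p ∣ 1 := (Nat.dvd_add_right ⟨_, rfl⟩).mp hdvd
    exact absurd (Nat.dvd_one.mp this) (by omega)
  have hp2 : Nat.Coprime p 2 := by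
    exact hodd.coprime_two_right
  have hG1odd : Odd G1 := by
    rw [Nat.odd_iff]
    have : G1 % 2 = (∑ i ∈ range (s - 1), p ^ i % 2) % 2 := Finset.sum_nat_mod _ _ _
    have hterm : ∀ i ∈ range (s - 1), p ^ i % 2 = 1 := by
      intro i _
      rw [← Nat.odd_iff]; exact hodd.pow
    rw [Finset.sum_congr rfl hterm, Finset.sum_const, Finset.card_range, smul_eq_mul, mul_one] at this
    rw [this]
    rcases hseven with ⟨k, hk⟩
    have hk' : s - 1 = 2 * (k - 1) + 1 := by omega
    omega
  have hG12 : Nat.Coprime G1 2 := by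
    exact hG1odd.coprime_two_right
  have hG1G2 : Nat.Coprime G1 G2 := by
    by_contra hcon
    obtain ⟨q, hqp, hq1, hq2⟩ := Nat.Prime.not_coprime_iff_dvd.mp hcon
    haveI : Fact q.Prime := ⟨hqp⟩
    have hd1 : q ∣ p ^ (s - 1) - 1 := h1 ▸ hq1.mul_right _
    have hd2 : q ∣ p ^ m - 1 := h2 ▸ hq2.mul_right _
    have hpow1 : (p : ZMod q) ^ (s - 1) = 1 := by
      have hc : ((p ^ (s - 1) - 1 : ℕ) : ZMod q) = 0 :=
        (ZMod.natCast_eq_zero_iff _ _).mpr hd1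
      rw [Nat.cast_sub (Nat.one_le_pow _ _ (by omega))] at hc
      push_cast at hc
      linear_combination hc
    have hpow2 : (p : ZMod q) ^ m = 1 := by
      have hc : ((p ^ m - 1 : ℕ) : ZMod q) = 0 :=
        (ZMod.natCast_eq_zero_iff _ _).mpr hd2
      rw [Nat.cast_sub (Nat.one_le_pow _ _ (by omega))] at hc
      push_cast at hc
      linear_combination hc
    have hord : orderOf (p : ZMod q) ∣ Nat.gcd m (s - 1) :=
      Nat.dvd_gcd (orderOf_dvd_of_pow_eq_one hpow2) (orderOf_dvd_of_pow_eq_one hpow1)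
    rw [hgcd, Nat.dvd_one, orderOf_eq_one_iff] at hord
    have hg1 : ((G1 : ℕ) : ZMod q) = 0 := (ZMod.natCast_eq_zero_iff _ _).mpr hq1
    have hg2 : ((G2 : ℕ) : ZMod q) = 0 := (ZMod.natCast_eq_zero_iff _ _).mpr hq2
    rw [hG1def] at hg1
    rw [hG2def] at hg2
    push_cast [hord] at hg1 hg2
    simp only [one_pow, Finset.sum_const, Finset.card_range, nsmul_eq_mul, mul_one] at hg1 hg2
    have hqs : q ∣ s - 1 := (ZMod.natCast_eq_zero_iff _ _).mp (by exact_mod_cast hg1)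
    have hqm : q ∣ m := (ZMod.natCast_eq_zero_iff _ _).mp (by exact_mod_cast hg2)
    have : q ∣ 1 := hgcd ▸ Nat.dvd_gcd hqm hqs
    exact hqp.one_lt.ne' (Nat.dvd_one.mp this)
  exact Nat.Coprime.mul (hp2.mul_right hpG2) (hG12.mul_right hG1G2)
end

section
/- Let p be an odd prime, m > 2 odd and s odd with gcd(m, s-1) = 1, n = 2(p^m-1)/(p-1), and v = n/2 + (p^s - 1)/(p-1). Then gcd(v - 1, n) = 1. -/
lemma geom_mul_aux (p k : ℕ) (hp : 1 ≤ p) :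
    (∑ i ∈ Finset.range k, p ^ i) * (p - 1) = p ^ k - 1 := by
  induction k with
  | zero => simp
  | succ k ih =>
    rw [Finset.sum_range_succ, add_mul, ih]
    have h1 : 1 ≤ p ^ k := Nat.one_le_pow _ _ hp
    have h2 : p ^ k * p = p ^ (k + 1) := (pow_succ p k).symm
    have h3 : p ^ k ≤ p ^ (k + 1) := Nat.pow_le_pow_right hp (by omega)
    have h4 : p ^ k * (p - 1) = p ^ (k + 1) - p ^ k := by
      rw [Nat.mul_sub, mul_one, h2]
    omega

lemma sum_modeq_aux (p q k : ℕ) (h : p ≡ 1 [MOD q]) :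
    (∑ i ∈ Finset.range k, p ^ i) ≡ k [MOD q] := by
  induction k with
  | zero => simp [Nat.ModEq.refl]
  | succ k ih =>
    rw [Finset.sum_range_succ]
    have hpk : p ^ k ≡ 1 [MOD q] := by
      simpa using h.pow k
    simpa using ih.add hpk

theorem stmt_14 (p m s : ℕ) (hp : p.Prime) (hodd : Odd p)
    (hm : 2 < m) (hmodd : Odd m) (hs : Odd s) (hs3 : 3 ≤ s)
    (hgcd : Nat.gcd m (s - 1) = 1)
    (n : ℕ) (hn : n = 2 * (p ^ m - 1) / (p - 1))
    (v : ℕ) (hv : v = n / 2 + (p ^ s - 1) / (p - 1)) :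
    Nat.gcd (v - 1) n = 1 := by
  have hp1 : 1 ≤ p := hp.one_lt.le.trans' (by omega)
  have hp2 : 2 ≤ p := hp.two_le
  have hp3 : 3 ≤ p := by
    rcases hodd with ⟨t, ht⟩; omega
  set A := ∑ i ∈ Finset.range m, p ^ i with hA
  set B := ∑ i ∈ Finset.range s, p ^ i with hB
  have hAeq : A * (p - 1) = p ^ m - 1 := geom_mul_aux p m hp1
  have hBeq : B * (p - 1) = p ^ s - 1 := geom_mul_aux p s hp1
  have hpne : p - 1 ≠ 0 := by omega
  have hdivA : (p ^ m - 1) / (p - 1) = A := by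
    rw [← hAeq, Nat.mul_div_cancel _ (by omega)]
  have hdivB : (p ^ s - 1) / (p - 1) = B := by
    rw [← hBeq, Nat.mul_div_cancel _ (by omega)]
  have hn2 : n = 2 * A := by
    rw [hn, Nat.mul_div_assoc 2 ⟨A, by rw [← hAeq]; ring⟩, hdivA]
  have hv2 : v = A + B := by rw [hv, hn2, hdivB]; omega
  -- parity
  have hA_odd : A % 2 = 1 := by
    have := sum_modeq_aux p 2 m (by
      rcases hodd with ⟨t, ht⟩
      show p % 2 = 1 % 2
      omega)
    have hm2 : m % 2 = 1 := Nat.odd_iff.mp hmodd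
    unfold Nat.ModEq at this
    omega
  have hB_odd : B % 2 = 1 := by
    have := sum_modeq_aux p 2 s (by
      rcases hodd with ⟨t, ht⟩
      show p % 2 = 1 % 2
      omega)
    have hs2 : s % 2 = 1 := Nat.odd_iff.mp hs
    unfold Nat.ModEq at this
    omega
  -- A ≥ 1, B ≥ 1
  have hApos : 1 ≤ A := by
    have : p ^ 0 ≤ A := Finset.single_le_sum (f := fun i => p ^ i)
      (fun i _ => Nat.zero_le _) (Finset.mem_range.mpr (by omega))
    simpa using this
  have hBpos : 1 ≤ B := by
    have : p ^ 0 ≤ B := Finset.single_le_sum (f := fun i => p ^ i)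
      (fun i _ => Nat.zero_le _) (Finset.mem_range.mpr (by omega))
    simpa using this
  -- structure: A = p * A' + 1, B = p * C + 1
  set C := ∑ i ∈ Finset.range (s - 1), p ^ i with hC
  have hBsplit : B = p * C + 1 := by
    have h1 : s = (s - 1) + 1 := by omega
    rw [hB, h1, Finset.sum_range_succ']
    simp [hC, Finset.mul_sum, pow_succ, mul_comm]
  have hAsplit : ∃ A', A = p * A' + 1 := by
    refine ⟨∑ i ∈ Finset.range (m - 1), p ^ i, ?_⟩
    have h1 : m = (m - 1) + 1 := by omega
    rw [hA, h1, Finset.sum_range_succ']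
    simp [Finset.mul_sum, pow_succ, mul_comm]
  have hCeq : C * (p - 1) = p ^ (s - 1) - 1 := geom_mul_aux p (s - 1) hp1
  -- main argument
  by_contra hne
  set g := Nat.gcd (v - 1) n with hg
  have hnpos : 0 < n := by omega
  have hgpos : 0 < g := Nat.gcd_pos_of_pos_right _ hnpos
  have hg2 : 2 ≤ g := by omega
  set q := g.minFac with hq
  have hqprime : q.Prime := Nat.minFac_prime (by omega)
  have hqv : q ∣ v - 1 := (Nat.minFac_dvd g).trans (Nat.gcd_dvd_left _ _)
  have hqn : q ∣ n := (Nat.minFac_dvd g).trans (Nat.gcd_dvd_right _ _)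
  -- v - 1 is odd
  have hvodd : (v - 1) % 2 = 1 := by omega
  have hq2 : q ≠ 2 := by
    intro h2
    rw [h2] at hqv
    rcases hqv with ⟨t, ht⟩
    omega
  have hqA : q ∣ A := by
    rcases (Nat.Prime.dvd_mul hqprime).mp (hn2 ▸ hqn) with h | h
    · exact absurd ((Nat.prime_dvd_prime_iff_eq hqprime Nat.prime_two).mp h) hq2
    · exact h
  have hqB1 : q ∣ B - 1 := by
    have h1 : v - 1 = A + (B - 1) := by omega
    have : q ∣ A + (B - 1) := h1 ▸ hqv
    exact (Nat.dvd_add_right hqA).mp this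
  have hqp : q ≠ p := by
    intro h2
    rw [h2] at hqA hqprime
    rcases hAsplit with ⟨A', hA'⟩
    rcases hqA with ⟨t, ht⟩
    have : p ∣ 1 := ⟨t - A', by
      rw [Nat.mul_sub, ← ht, hA']; omega⟩
    exact hp.one_lt.ne' (Nat.eq_one_of_dvd_one this)
  have hqC : q ∣ C := by
    have hpc : q ∣ p * C := by rw [← Nat.add_sub_cancel (p * C) 1, ← hBsplit]; exact hqB1
    rcases (Nat.Prime.dvd_mul hqprime).mp hpc with h | h
    · exact absurd ((Nat.prime_dvd_prime_iff_eq hqprime hp).mp h) hqp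
    · exact h
  -- q divides p^m - 1 and p^(s-1) - 1
  have hqm : q ∣ p ^ m - 1 := hAeq ▸ Dvd.dvd.mul_right hqA _
  have hqs : q ∣ p ^ (s - 1) - 1 := hCeq ▸ Dvd.dvd.mul_right hqC _
  -- in ZMod q, p^m = 1 and p^(s-1) = 1
  have hmod1 : p ^ m ≡ 1 [MOD q] := ((Nat.modEq_iff_dvd' (Nat.one_le_pow _ _ hp1)).mpr hqm).symm
  have hmod2 : p ^ (s - 1) ≡ 1 [MOD q] := ((Nat.modEq_iff_dvd' (Nat.one_le_pow _ _ hp1)).mpr hqs).symm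
  have hz1 : (p : ZMod q) ^ m = 1 := by
    have := (ZMod.natCast_eq_natCast_iff _ _ _).mpr hmod1
    push_cast at this
    simpa using this
  have hz2 : (p : ZMod q) ^ (s - 1) = 1 := by
    have := (ZMod.natCast_eq_natCast_iff _ _ _).mpr hmod2
    push_cast at this
    simpa using this
  have hz : (p : ZMod q) = 1 := by
    have := (pow_gcd_eq_one (a := (p : ZMod q))).mpr ⟨hz1, hz2⟩
    rwa [hgcd, pow_one] at this
  have hpq : p ≡ 1 [MOD q] := by
    have : ((p : ℕ) : ZMod q) = ((1 : ℕ) : ZMod q) := by simpa using hz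
    exact (ZMod.natCast_eq_natCast_iff _ _ _).mp this
  -- hence A ≡ m and C ≡ s - 1 mod q
  have hAm : A ≡ m [MOD q] := sum_modeq_aux p q m hpq
  have hCs : C ≡ s - 1 [MOD q] := sum_modeq_aux p q (s - 1) hpq
  have hqm' : q ∣ m := by
    have h0 : A ≡ 0 [MOD q] := (Nat.modEq_zero_iff_dvd).mpr hqA
    exact (Nat.modEq_zero_iff_dvd).mp (hAm.symm.trans h0)
  have hqs' : q ∣ s - 1 := by
    have h0 : C ≡ 0 [MOD q] := (Nat.modEq_zero_iff_dvd).mpr hqC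
    exact (Nat.modEq_zero_iff_dvd).mp (hCs.symm.trans h0)
  have : q ∣ Nat.gcd m (s - 1) := Nat.dvd_gcd hqm' hqs'
  rw [hgcd] at this
  exact hqprime.one_lt.ne' (Nat.eq_one_of_dvd_one this)
end

section
/- Let p be an odd prime, x a nonzero element of F_{p^m}, α ∈ F_p^*, and let t, s, h, v be integers with 0 ≤ t, s, h ≤ m-1 and p^t·v ≡ v + p^s - p^h (mod p^m - 1). If (x + α)^v = ±(x^v + α) and x + α ≠ 0, then x^v·(x^{p^s - p^h} - 1)·(x^{p^h - v} - 1) = 0, i.e., x^{p^s} + x^v = x^{v p^t} + x^{p^h} implies x^{p^s - p^h} = 1 or x^{p^h - v} = 1. -/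
private lemma zpow_congr_aux {F : Type*} [Field F] {y : F} (hy : y ≠ 0) {n a b : ℤ}
    (hn : y ^ n = 1) (hab : a ≡ b [ZMOD n]) : y ^ a = y ^ b := by
  obtain ⟨k, hk⟩ := Int.ModEq.dvd hab
  have hb : b = a + n * k := by linarith
  rw [hb, zpow_add₀ hy, zpow_mul, hn, one_zpow, mul_one]

theorem stmt_16 (p m : ℕ) [Fact p.Prime] (hodd : Odd p)
    (t s h : ℕ) (v : ℤ)
    (ht : t ≤ m - 1) (hs : s ≤ m - 1) (hh : h ≤ m - 1)
    (hcong : (p : ℤ) ^ t * v ≡ v + (p : ℤ) ^ s - (p : ℤ) ^ h [ZMOD ((p : ℤ) ^ m - 1)])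
    (x : GaloisField p m) (hx0 : x ≠ 0)
    (α : ZMod p) (hα : α ≠ 0)
    (hxα : x + algebraMap (ZMod p) (GaloisField p m) α ≠ 0)
    (heq : (x + algebraMap (ZMod p) (GaloisField p m) α) ^ v =
            x ^ v + algebraMap (ZMod p) (GaloisField p m) α ∨
           (x + algebraMap (ZMod p) (GaloisField p m) α) ^ v =
            -(x ^ v + algebraMap (ZMod p) (GaloisField p m) α)) :
    x ^ v * (x ^ ((p : ℤ) ^ s - (p : ℤ) ^ h) - 1) * (x ^ ((p : ℤ) ^ h - v) - 1) = 0 := by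
  rcases eq_or_ne m 0 with rfl | hm
  · -- m = 0 : s = h = 0, middle factor vanishes
    have hs0 : s = 0 := Nat.le_zero.mp hs
    have hh0 : h = 0 := Nat.le_zero.mp hh
    subst hs0; subst hh0
    simp
  set A : GaloisField p m := algebraMap (ZMod p) (GaloisField p m) α with hA_def
  -- basic facts
  have hp1 : 1 ≤ p ^ m := Nat.one_le_pow _ _ (Fact.out (p := p.Prime)).pos
  have hcast : (((p : ℕ) ^ m - 1 : ℕ) : ℤ) = (p : ℤ) ^ m - 1 := by
    push_cast [hp1]; ring
  have yn : ∀ y : GaloisField p m, y ≠ 0 → y ^ ((p : ℤ) ^ m - 1) = 1 := by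
    intro y hy
    have : Fintype (GaloisField p m) := Fintype.ofFinite _
    have hcard : Fintype.card (GaloisField p m) = p ^ m := by
      rw [← Nat.card_eq_fintype_card]; exact GaloisField.card p m hm
    rw [← hcast, zpow_natCast, ← hcard]
    exact FiniteField.pow_card_sub_one_eq_one y hy
  -- Frobenius
  have frob : ∀ (z : GaloisField p m) (k : ℕ), (z + A) ^ (p ^ k) = z ^ (p ^ k) + A := by
    intro z k
    rw [add_pow_char_pow, hA_def, ← map_pow, ZMod.pow_card_pow]
  -- extract the sign
  obtain ⟨ε, hε, hyv⟩ : ∃ ε : GaloisField p m, (ε = 1 ∨ ε = -1) ∧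
      (x + A) ^ v = ε * (x ^ v + A) := by
    rcases heq with h' | h'
    · exact ⟨1, Or.inl rfl, by simpa using h'⟩
    · exact ⟨-1, Or.inr rfl, by simpa using h'⟩
  have hε0 : ε ≠ 0 := by rcases hε with rfl | rfl <;> simp
  have hεp : ε ^ (p ^ t) = ε := by
    rcases hε with rfl | rfl
    · simp
    · exact Odd.neg_one_pow (hodd.pow)
  -- exponent congruence : v * p^t + p^h ≡ v + p^s
  have h2 : v * (p : ℤ) ^ t + (p : ℤ) ^ h ≡ v + (p : ℤ) ^ s [ZMOD ((p : ℤ) ^ m - 1)] := by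
    have := hcong.add_right ((p : ℤ) ^ h)
    rw [mul_comm] at this
    have e : v + (p : ℤ) ^ s - (p : ℤ) ^ h + (p : ℤ) ^ h = v + (p : ℤ) ^ s := by ring
    rwa [e] at this
  -- zpow versions of nat-power Frobenius values
  have castk : ∀ k : ℕ, ((p : ℤ) ^ k) = ((p ^ k : ℕ) : ℤ) := by intro k; push_cast; ring
  have yph : (x + A) ^ ((p : ℤ) ^ h) = x ^ ((p : ℤ) ^ h) + A := by
    rw [castk h, zpow_natCast, zpow_natCast, frob]
  have yps : (x + A) ^ ((p : ℤ) ^ s) = x ^ ((p : ℤ) ^ s) + A := by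
    rw [castk s, zpow_natCast, zpow_natCast, frob]
  -- (x+A)^(v p^t) = ε (x^(v p^t) + A)
  have E1 : (x + A) ^ (v * (p : ℤ) ^ t) = ε * (x ^ (v * (p : ℤ) ^ t) + A) := by
    rw [zpow_mul, castk t, zpow_natCast, hyv, mul_pow, hεp, frob,
      ← zpow_natCast (x ^ v), ← zpow_mul, ← castk t]
  -- key identity
  have hkey : (x + A) ^ (v * (p : ℤ) ^ t + (p : ℤ) ^ h) = (x + A) ^ (v + (p : ℤ) ^ s) :=
    zpow_congr_aux hxα (yn _ hxα) h2
  rw [zpow_add₀ hxα, zpow_add₀ hxα, E1, yph, yps, hyv] at hkey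
  -- cancel ε
  have hkey2 : (x ^ (v * (p : ℤ) ^ t) + A) * (x ^ ((p : ℤ) ^ h) + A)
      = (x ^ v + A) * (x ^ ((p : ℤ) ^ s) + A) := by
    apply mul_left_cancel₀ hε0
    linear_combination hkey
  -- the pure-x exponent identity
  have hx2 : x ^ (v * (p : ℤ) ^ t) * x ^ ((p : ℤ) ^ h) = x ^ v * x ^ ((p : ℤ) ^ s) := by
    rw [← zpow_add₀ hx0, ← zpow_add₀ hx0]
    exact zpow_congr_aux hx0 (yn _ hx0) h2
  -- A ≠ 0
  have hA0 : A ≠ 0 := by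
    simp only [hA_def, ne_eq, map_eq_zero]
    exact hα
  -- conclude the linear relation
  have hfinal : x ^ (v * (p : ℤ) ^ t) + x ^ ((p : ℤ) ^ h) = x ^ v + x ^ ((p : ℤ) ^ s) := by
    apply mul_left_cancel₀ hA0
    linear_combination hkey2 - hx2
  -- rewrite the goal using zpow arithmetic
  have hxh : x ^ ((p : ℤ) ^ h) ≠ 0 := zpow_ne_zero _ hx0
  have hxv : x ^ v ≠ 0 := zpow_ne_zero _ hx0
  rw [zpow_sub₀ hx0, zpow_sub₀ hx0]
  field_simp
  linear_combination (-1 : GaloisField p m) * (x ^ ((p : ℤ) ^ h) * hfinal - hx2)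
end

section
/- Let p be an odd prime, m > 2 odd with gcd(m, p-1) = 1, s even with gcd(m, s) = gcd(m, s-1) = 1, and v = (p^s - 1)/(p-1). Then gcd(1 - v, 2(p^m-1)/(p-1)) = 1, i.e., gcd(v - 1, n) = 1 where n = 2(p^m-1)/(p-1). -/
/-!
Write `G n = 1 + p + ⋯ + p^(n-1)`. Then `v - 1 = p * G (s - 1)` and the second argument is
`2 * G m`. Now `G m ≡ 1 [MOD p]`, `G (s - 1) ≡ s - 1 ≡ 1 [MOD 2]` as `p` is odd, and
`gcd (G a) (G b) = 1` for coprime `a`, `b`: a common divisor `d` has `p ^ a ≡ p ^ b ≡ 1`,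
hence `p ≡ 1 [MOD d]`, so `G a ≡ a` and `G b ≡ b [MOD d]`, and `d` divides `gcd a b = 1`.
-/

open Finset

namespace Nat

variable {x : ℕ}

lemma ModEq.geom_sum {d : ℕ} (h : x ≡ 1 [MOD d]) (n : ℕ) :
    ∑ i ∈ range n, x ^ i ≡ n [MOD d] := by
  rw [← ZMod.natCast_eq_natCast_iff] at h ⊢
  push_cast [h]
  simp

lemma coprime_geom_sum {n : ℕ} (hn : n ≠ 0) : x.Coprime (∑ i ∈ range n, x ^ i) := by
  obtain ⟨k, rfl⟩ := exists_eq_succ_of_ne_zero hn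
  rw [geom_sum_succ, coprime_mul_left_add_right]
  exact coprime_one_right x

lemma Coprime.geom_sum (x : ℕ) {a b : ℕ} (h : a.Coprime b) :
    (∑ i ∈ range a, x ^ i).Coprime (∑ i ∈ range b, x ^ i) := by
  set d := gcd (∑ i ∈ range a, x ^ i) (∑ i ∈ range b, x ^ i)
  have pow_eq_one {n : ℕ} (hd : d ∣ ∑ i ∈ range n, x ^ i) : (x : ZMod d) ^ n = 1 := by
    rw [← ZMod.natCast_eq_zero_iff] at hd
    push_cast at hd
    rw [← sub_eq_zero, ← geom_sum_mul, hd, zero_mul]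
  have hx : x ≡ 1 [MOD d] := by
    rw [← ZMod.natCast_eq_natCast_iff, Nat.cast_one,
      ← pow_one (x : ZMod d), ← h.gcd_eq_one, pow_gcd_eq_one]
    exact ⟨pow_eq_one (gcd_dvd_left _ _), pow_eq_one (gcd_dvd_right _ _)⟩
  have hda : d ∣ a := ((hx.geom_sum a).dvd_iff dvd_rfl).mp (gcd_dvd_left _ _)
  have hdb : d ∣ b := ((hx.geom_sum b).dvd_iff dvd_rfl).mp (gcd_dvd_right _ _)
  exact eq_one_of_dvd_one (h ▸ dvd_gcd hda hdb)

end Nat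

theorem stmt_17_general (p m s : ℕ) (hp : p.Prime) (hodd : Odd p)
    (hm : 2 < m) (hs : 2 ≤ s) (hseven : Even s) (hms1 : Nat.gcd m (s - 1) = 1)
    (v : ℕ) (hv : v = (p ^ s - 1) / (p - 1)) :
    Nat.gcd (v - 1) (2 * (p ^ m - 1) / (p - 1)) = 1 := by
  set G : ℕ → ℕ := fun n => ∑ i ∈ range n, p ^ i
  have hv1 : v - 1 = p * G (s - 1) := by
    have : v = p * G (s - 1) + 1 := by
      rw [hv, ← Nat.geomSum_eq hp.two_le, ← geom_sum_succ, Nat.sub_add_cancel (by omega)]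
    omega
  have hn : 2 * (p ^ m - 1) / (p - 1) = 2 * G m := by
    rw [Nat.mul_div_assoc 2 (Nat.sub_one_dvd_pow_sub_one p m), ← Nat.geomSum_eq hp.two_le]
  have hp2 : p.Coprime 2 := Nat.coprime_two_right.mpr hodd
  have hG2 : (G (s - 1)).Coprime 2 := by
    have hmod : G (s - 1) % 2 = (s - 1) % 2 := Nat.ModEq.geom_sum (Nat.odd_iff.mp hodd) (s - 1)
    rw [Nat.coprime_two_right, Nat.odd_iff, hmod]
    obtain ⟨k, rfl⟩ := hseven
    omega
  rw [hv1, hn]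
  exact Nat.Coprime.mul_left (hp2.mul_right (Nat.coprime_geom_sum (by omega)))
    (hG2.mul_right ((Nat.coprime_comm.mp hms1).geom_sum p))

theorem stmt_17 (p m s : ℕ) (hp : p.Prime) (hodd : Odd p)
    (hm : 2 < m) (hmodd : Odd m) (hmp : Nat.gcd m (p - 1) = 1)
    (hs : 2 ≤ s) (hseven : Even s)
    (hms : Nat.gcd m s = 1) (hms1 : Nat.gcd m (s - 1) = 1)
    (v : ℕ) (hv : v = (p ^ s - 1) / (p - 1)) :
    Nat.gcd (v - 1) (2 * (p ^ m - 1) / (p - 1)) = 1 :=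
  stmt_17_general p m s hp hodd hm hs hseven hms1 v hv
end
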